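/- Let Q be a quasi-tree of a connected ribbon graph Γ with internally dead subgraph D = D(Q), and let S₁ be a set of internally live edges. Let W be the spanning subgraph of the graph G_Q (vertices = components of D, edges = internally live edges of Q) with edge set S₁. Then n(D ∪ S₁) = n(D) + n(W) and g(D ∪ S₁) = g(D) + n(W). -/

import Mathlib

open Equiv

noncomputable section

/-- Number of orbits of the map `f` on `α` (the equivalence generated by `i ~ f i`). -/
def orbCountOf {α : Type*} (f : α → α) : ℕ :=
  Nat.card (Quot (fun i j : α => j = f i))

/-- `x` lies on the arc of the cycle of `f` starting at `a` strictly before reaching `b`. -/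
def ReachesBefore {α : Type*} (f : α → α) (a x b : α) : Prop :=
  ∃ m : ℕ, f^[m] a = x ∧ ∀ k ≤ m, f^[k] a ≠ b

/-- The chords `{a,b}` and `{c,d}` of the cycle parametrized by `f` intersect:
exactly one of `c`, `d` lies on the arc from `a` to `b`. -/
def ChordsCross {α : Type*} (f : α → α) (a b c d : α) : Prop :=
  ¬ (ReachesBefore f a c b ↔ ReachesBefore f a d b)

/-- A combinatorial oriented ribbon graph on `2 * n` half-edges, given by a vertex
permutation `σ0` and a fixed-point free involution `σ1` pairing the half-edges
into edges.  Vertices, edges and faces are the orbits of `σ0`, `σ1`, `σ2 = (σ0 σ1)⁻¹`. -/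
structure RibbonGraph (n : ℕ) where
  σ0 : Perm (Fin (2 * n))
  σ1 : Perm (Fin (2 * n))
  invol : σ1 * σ1 = 1
  fixfree : ∀ i, σ1 i ≠ i

namespace RibbonGraph

variable {n : ℕ} (Γ : RibbonGraph n)

/-- The face permutation `σ2 = (σ0 σ1)⁻¹`, so that `σ0 σ1 σ2 = 1`. -/
def σ2 : Perm (Fin (2 * n)) := (Γ.σ0 * Γ.σ1)⁻¹

/-- `Γ` is connected iff the group generated by `σ0, σ1` acts transitively on half-edges. -/
def Connected : Prop :=
  ∀ i j : Fin (2 * n), ∃ g ∈ Subgroup.closure {Γ.σ0, Γ.σ1}, g i = j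

/-- A set `A` of half-edges determines a spanning ribbon subgraph iff it is closed
under the edge involution `σ1`. -/
def Closed (A : Finset (Fin (2 * n))) : Prop := ∀ i ∈ A, Γ.σ1 i ∈ A

/-- The number of vertices (orbits of `σ0`). -/
def vCount : ℕ := orbCountOf Γ.σ0

/-- The number of edges of the spanning subgraph with half-edge set `A`. -/
def eCount (_Γ : RibbonGraph n) (A : Finset (Fin (2 * n))) : ℕ := A.card / 2

/-- Relation whose equivalence classes are the connected components of the spanning
subgraph with half-edge set `A`. -/
def compRel (A : Finset (Fin (2 * n))) (i j : Fin (2 * n)) : Prop :=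
  j = Γ.σ0 i ∨ (i ∈ A ∧ j = Γ.σ1 i)

/-- The number of connected components of the spanning subgraph `A`. -/
def kComp (A : Finset (Fin (2 * n))) : ℕ := Nat.card (Quot (Γ.compRel A))

/-- The boundary map of a regular neighborhood of the spanning subgraph `A` on the
surface of `Γ`: it is `σ0` on half-edges not in `A`, and `σ2⁻¹ = σ0 σ1` on half-edges
in `A`.  Its orbits are the boundary components (faces) of `A`. -/
def bdryMap (A : Finset (Fin (2 * n))) : Fin (2 * n) → Fin (2 * n) :=
  fun i => if i ∈ A then Γ.σ0 (Γ.σ1 i) else Γ.σ0 i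

/-- The number of faces (boundary components `|γ_A|`) of the spanning subgraph `A`. -/
def faces (A : Finset (Fin (2 * n))) : ℕ := orbCountOf (Γ.bdryMap A)

/-- The nullity `n(A) = e(A) - v(Γ) + k(A)` of the spanning subgraph `A`. -/
def nullity (A : Finset (Fin (2 * n))) : ℤ := (Γ.eCount A : ℤ) + Γ.kComp A - Γ.vCount

/-- Twice the genus of the spanning subgraph `A`:
`2 g(A) = 2 k(A) - v(Γ) + e(A) - f(A)`. -/
def twoGenus (A : Finset (Fin (2 * n))) : ℤ :=
  2 * (Γ.kComp A : ℤ) - Γ.vCount + Γ.eCount A - Γ.faces A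

/-- The nullity of `A`, as a natural number. -/
def nullNat (A : Finset (Fin (2 * n))) : ℕ := Γ.eCount A + Γ.kComp A - Γ.vCount

/-- The genus of `A`, as a natural number. -/
def genusNat (A : Finset (Fin (2 * n))) : ℕ :=
  (2 * Γ.kComp A + Γ.eCount A - Γ.vCount - Γ.faces A) / 2

/-- A quasi-tree: a connected spanning ribbon subgraph with exactly one face. -/
def IsQuasiTree (A : Finset (Fin (2 * n))) : Prop :=
  Γ.Closed A ∧ Γ.kComp A = 1 ∧ Γ.faces A = 1

/-- The order of the edge of the half-edge `i`: the minimum of its two half-edge labels. -/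
def edgeOrd (i : Fin (2 * n)) : ℕ := min i.1 (Γ.σ1 i).1

/-- The chords of the edges of `i` and `j` intersect in the ordered chord diagram `C_A`
of the boundary curve `γ_A`. -/
def Crosses (A : Finset (Fin (2 * n))) (i j : Fin (2 * n)) : Prop :=
  ChordsCross (Γ.bdryMap A) i (Γ.σ1 i) j (Γ.σ1 j)

/-- The edge of `i` is live with respect to the quasi-tree `A`: its chord in `C_A`
intersects no lower-ordered chord. -/
def Live (A : Finset (Fin (2 * n))) (i : Fin (2 * n)) : Prop :=
  ∀ j : Fin (2 * n), Γ.edgeOrd j < Γ.edgeOrd i → ¬ Γ.Crosses A i j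

open scoped Classical in
/-- The half-edge set `D(A)` of the internally dead edges of the quasi-tree `A`. -/
noncomputable def deadIn (A : Finset (Fin (2 * n))) : Finset (Fin (2 * n)) :=
  A.filter (fun i => ¬ Γ.Live A i)

open scoped Classical in
/-- The number of externally live edges `|E(A)|` of the quasi-tree `A`. -/
noncomputable def extLiveCount (A : Finset (Fin (2 * n))) : ℕ :=
  (Finset.univ.filter (fun i => i ∉ A ∧ Γ.Live A i)).card / 2

open scoped Classical in
/-- The number of internally live edges `|I(A)|` of the quasi-tree `A`. -/
noncomputable def intLiveCount (A : Finset (Fin (2 * n))) : ℕ :=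
  (A.filter (fun i => Γ.Live A i)).card / 2

open scoped Classical in
/-- The Bollobás–Riordan polynomial of `Γ`, via its spanning subgraph expansion
`C(Γ) = Σ_H (X-1)^(k(H)-1) Y^(n(H)) Z^(g(H))`. -/
noncomputable def BR (X Y Z : ℚ) : ℚ :=
  ∑ A ∈ Finset.univ.filter (fun A : Finset (Fin (2 * n)) => Γ.Closed A),
    (X - 1) ^ (Γ.kComp A - 1) * Y ^ Γ.nullNat A * Z ^ Γ.genusNat A

open scoped Classical in
/-- The set of quasi-trees of `Γ`. -/
noncomputable def quasiTrees : Finset (Finset (Fin (2 * n))) :=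
  Finset.univ.filter (fun A => Γ.IsQuasiTree A)

open scoped Classical in
/-- The Tutte polynomial of the graph `G_A` (vertices: the components of `D(A)`;
edges: the internally live edges of `A`), via its spanning subgraph expansion
`T(x,y) = Σ_W (x-1)^(k(W)-1) (y-1)^(n(W))`.  A spanning subgraph `W` of `G_A`
corresponds to a `σ1`-closed set `S` of internally live half-edges; then
`k(W) = k(D ∪ S)` and `n(W) = k(D ∪ S) + e(S) - k(D)`. -/
noncomputable def TutteGQ (A : Finset (Fin (2 * n))) (x y : ℚ) : ℚ :=
  ∑ S ∈ (A.filter (fun i => Γ.Live A i)).powerset.filter (fun S => Γ.Closed S),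
    (x - 1) ^ (Γ.kComp (Γ.deadIn A ∪ S) - 1) *
      (y - 1) ^ (Γ.kComp (Γ.deadIn A ∪ S) + Γ.eCount S - Γ.kComp (Γ.deadIn A))

/-- A partial resolution assigns `some true` / `some false` / `none` ( `*` )
to half-edges; it should be constant on edges. -/
def EdgeConst (ρ : Fin (2 * n) → Option Bool) : Prop := ∀ i, ρ (Γ.σ1 i) = ρ i

open scoped Classical in
/-- The half-edge set `H_ρ` of the partial resolution `ρ`. -/
noncomputable def Hset (_Γ : RibbonGraph n) (ρ : Fin (2 * n) → Option Bool) : Finset (Fin (2 * n)) :=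
  Finset.univ.filter (fun i => ρ i = some true)

/-- `ρ` is split: `f(H_ρ ∪ U) > 1` for every (σ1-closed) set `U` of unresolved edges. -/
def Split (ρ : Fin (2 * n) → Option Bool) : Prop :=
  ∀ U : Finset (Fin (2 * n)), (∀ i ∈ U, ρ i = none) → (∀ i ∈ U, Γ.σ1 i ∈ U) →
    1 < Γ.faces (Γ.Hset ρ ∪ U)

/-- Resolve the edge of `e` in `ρ` to the value `b`. -/
def resolveEdge (ρ : Fin (2 * n) → Option Bool) (e : Fin (2 * n)) (b : Bool) :
    Fin (2 * n) → Option Bool :=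
  fun i => if i = e ∨ i = Γ.σ1 e then some b else ρ i

/-- The unresolved edge `e` is nugatory in `ρ`: one of its two resolutions is split. -/
def Nugatory (ρ : Fin (2 * n) → Option Bool) (e : Fin (2 * n)) : Prop :=
  Γ.Split (Γ.resolveEdge ρ e false) ∨ Γ.Split (Γ.resolveEdge ρ e true)

/-- `Γ(ρ) = γ_ρ ∪ Int(ρ⁻¹(*))` is connected: the boundary components of `H_ρ`
together with the unresolved edges connect all half-edges. -/
def GammaConn (ρ : Fin (2 * n) → Option Bool) : Prop :=
  ∀ i j : Fin (2 * n),
    Relation.EqvGen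
      (fun x y => y = Γ.bdryMap (Γ.Hset ρ) x ∨ (ρ x = none ∧ y = Γ.σ1 x)) i j

/-- The partial resolution seen at the moment the edge of `e` is considered in the
resolution process: edges of higher order keep their value, the rest are unresolved. -/
def restrictAbove (ρ : Fin (2 * n) → Option Bool) (e : Fin (2 * n)) :
    Fin (2 * n) → Option Bool :=
  fun j => if Γ.edgeOrd e < Γ.edgeOrd j then ρ j else none

/-- `ρ` is a leaf of the binary resolution tree `𝒯`: edges are resolved in decreasing
order, an edge is left unresolved exactly when it is nugatory at its turn. -/
def IsLeaf (ρ : Fin (2 * n) → Option Bool) : Prop :=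
  Γ.EdgeConst ρ ∧
  (∀ i, ρ i = none → Γ.Nugatory (Γ.restrictAbove ρ i) i) ∧
  (∀ i, ρ i ≠ none → ¬ Γ.Nugatory (Γ.restrictAbove ρ i) i)

/-- The spanning subgraph `A` lies in the interval `[ρ]` of the Boolean lattice. -/
def MemInterval (_Γ : RibbonGraph n) (ρ : Fin (2 * n) → Option Bool) (A : Finset (Fin (2 * n))) : Prop :=
  ∀ i, (ρ i = some true → i ∈ A) ∧ (ρ i = some false → i ∉ A)

/-- The pair of half-edges of the edge of `i`. -/
def edgePair (i : Fin (2 * n)) : Finset (Fin (2 * n)) := {i, Γ.σ1 i}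

/-- For a spanning tree `A`, `j ∈ cut(A, i)` (equivalently `i ∈ cyc(A, j)`):
the edge of `j` reconnects `A` minus the edge of `i`. -/
def InCut (A : Finset (Fin (2 * n))) (i j : Fin (2 * n)) : Prop :=
  Γ.kComp ((A \ Γ.edgePair i) ∪ Γ.edgePair j) = 1

/-- Tutte's internal activity: `i ∈ A` is internally active iff it is the
lowest-ordered edge of its cut `cut(A, i)`. -/
def TutteIntActive (A : Finset (Fin (2 * n))) (i : Fin (2 * n)) : Prop :=
  i ∈ A ∧ ∀ j, j ∉ A → Γ.InCut A i j → Γ.edgeOrd i < Γ.edgeOrd j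

/-- Tutte's external activity: `j ∉ A` is externally active iff it is the
lowest-ordered edge of its cycle `cyc(A, j)`. -/
def TutteExtActive (A : Finset (Fin (2 * n))) (j : Fin (2 * n)) : Prop :=
  j ∉ A ∧ ∀ i ∈ A, Γ.InCut A i j → Γ.edgeOrd j < Γ.edgeOrd i

end RibbonGraph

end

/-!
Let `L` be the set of internally live edges of `A`, so that `D = A \ L` and
`D ∪ S₁ = A \ (L \ S₁)`. The nullity identity only needs `e(D ∪ S₁) = e(D) + e(S₁)`; the genus
identity also needs `f(D) = f(D ∪ S₁) + e(S₁)`, which follows from: deleting a set `T` of live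
edges from a quasi-tree leaves `1 + e(T)` faces.

The unique face of `A` is a cyclic permutation of the half-edges, which we identify with
`x ↦ x + 1` on `ZMod p`. Deleting `T` composes it with the swaps of the two ends of each edge
of `T`, and live edges are chords which pairwise do not cross. Add the chords one at a time:
no earlier chord separates the two ends of the new chord, so they lie on a common cycle, and
the swap splits that cycle into two. The induction keeps track of the cycles: two points off
the chords share a cycle exactly when no chord separates them, because the side of a chord on
which a point lies is constant along each cycle.
-/

open Function

theorem orbCountOf_conj {α β : Type*} (E : α ≃ β) {f : α → α} {g : β → β}
    (h : Semiconj E f g) : orbCountOf f = orbCountOf g :=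
  Nat.card_congr <| Quot.congr E fun a b => by rw [← h, E.apply_eq_iff_eq]

theorem Function.Involutive.piecewise {α : Type*} {ι : α → α} (hι : Involutive ι)
    {T : Finset α} [DecidablePred (· ∈ T)] (hT : ∀ z ∈ T, ι z ∈ T) :
    Involutive (T.piecewise ι id) := by
  intro z
  by_cases hz : z ∈ T
  · simp [hz, hT z hz, hι z]
  · simp [hz]

namespace Equiv.Perm

variable {α : Type*} [Finite α] {f g : Perm α} {a b x y : α}

theorem SameCycle.rel_of_forall {r : α → α → Prop} (hr : Equivalence r)
    (h : ∀ z, r z (f z)) (hxy : f.SameCycle x y) : r x y := by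
  obtain ⟨i, rfl⟩ := hxy.exists_nat_pow_eq
  clear hxy
  induction i with
  | zero => exact hr.refl x
  | succ i ih => rw [pow_succ', mul_apply]; exact hr.trans ih (h _)

theorem SameCycle.iff_of_forall {P : α → Prop} (hP : ∀ z, P (f z) ↔ P z)
    (hxy : f.SameCycle x y) : P x ↔ P y :=
  hxy.rel_of_forall (r := fun u v => P u ↔ P v) ⟨fun _ => Iff.rfl, Iff.symm, Iff.trans⟩
    fun z => (hP z).symm

theorem quot_mk_eq_iff_sameCycle :
    Quot.mk (fun i j => j = f i) x = Quot.mk _ y ↔ f.SameCycle x y := by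
  constructor
  · intro h
    refine ((SameCycle.equivalence f).eqvGen_iff).mp ?_
    exact (Quot.eqvGen_exact h).mono fun u v huv => huv ▸ sameCycle_apply_right.mpr (.refl _ _)
  · intro h
    exact Quot.eqvGen_sound (h.rel_of_forall (Relation.EqvGen.is_equivalence _)
      fun z => .rel _ _ rfl)

theorem orbCountOf_eq_one_iff [Nonempty α] : orbCountOf f = 1 ↔ ∀ x y, f.SameCycle x y := by
  rw [orbCountOf, Nat.card_eq_one_iff_unique]
  refine ⟨fun h x y => quot_mk_eq_iff_sameCycle.mp (h.1.elim _ _), fun h => ⟨⟨?_⟩, ?_⟩⟩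
  · rintro ⟨x⟩ ⟨y⟩
    exact quot_mk_eq_iff_sameCycle.mpr (h x y)
  · exact ⟨Quot.mk _ (Classical.arbitrary α)⟩

theorem exists_equiv_zmod {c : Perm α} (hc : orbCountOf c = 1) :
    ∃ (p : ℕ) (_ : NeZero p) (E : α ≃ ZMod p), Semiconj E c (· + 1) := by
  have : Nonempty α := by
    by_contra h
    rw [not_nonempty_iff] at h
    simp [orbCountOf] at hc
  have x₀ : α := Classical.arbitrary α
  have horb : ∀ y, y ∈ MulAction.orbit (Subgroup.zpowers c) x₀ := fun y => by
    obtain ⟨i, rfl⟩ := orbCountOf_eq_one_iff.mp hc x₀ y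
    exact ⟨⟨c ^ i, Subgroup.zpow_mem_zpowers c i⟩, rfl⟩
  let E := (subtypeUnivEquiv horb).symm.trans (MulAction.orbitZPowersEquiv c x₀)
  have hE : ∀ k : ℤ, E.symm k = (c ^ k) x₀ := fun k => by
    simp only [E, symm_trans_apply, MulAction.orbitZPowersEquiv_symm_apply']
    rfl
  refine ⟨_, inferInstance, E, fun x => ?_⟩
  obtain ⟨k, hk⟩ := ZMod.intCast_surjective (E x)
  have hx : x = (c ^ k) x₀ := by rw [← hE, hk, E.symm_apply_apply]
  show E (c x) = E x + 1
  rw [← hk, ← Int.cast_one, ← Int.cast_add, ← E.eq_symm_apply, hE, hx, add_comm,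
    zpow_one_add, mul_apply]

variable [DecidableEq α]

theorem SameCycle.of_mul_swap (hab : g.SameCycle a b) (h : (g * swap a b).SameCycle x y) :
    g.SameCycle x y := by
  refine h.rel_of_forall (SameCycle.equivalence g) fun z => ?_
  rw [mul_apply, sameCycle_apply_right]
  rcases eq_or_ne z a with rfl | hza
  · rw [swap_apply_left]; exact hab
  rcases eq_or_ne z b with rfl | hzb
  · rw [swap_apply_right]; exact hab.symm
  rw [swap_apply_of_ne_of_ne hza hzb]

theorem SameCycle.mul_swap_left_or_right (hx : g.SameCycle a x) :
    (g * swap a b).SameCycle x a ∨ (g * swap a b).SameCycle x b := by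
  set g' := g * swap a b
  have hga : g a = g' b := by simp [g']
  have hgb : g b = g' a := by simp [g']
  refine (hx.iff_of_forall (P := fun z => g'.SameCycle z a ∨ g'.SameCycle z b) fun z => ?_).mp
    (.inl (.refl _ _))
  rcases eq_or_ne z a with rfl | hza
  · simp only [hga, sameCycle_apply_left]
    exact iff_of_true (.inr (.refl _ _)) (.inl (.refl _ _))
  rcases eq_or_ne z b with rfl | hzb
  · simp only [hgb, sameCycle_apply_left]
    exact iff_of_true (.inl (.refl _ _)) (.inr (.refl _ _))
  have : g z = g' z := by simp [g', swap_apply_of_ne_of_ne hza hzb]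
  simp only [this, sameCycle_apply_left]

theorem SameCycle.mul_swap_of_not_sameCycle (hab : g.SameCycle a b) (hxa : ¬ g.SameCycle x a)
    (hxy : g.SameCycle x y) : (g * swap a b).SameCycle x y := by
  set g' := g * swap a b
  refine (hxy.iff_of_forall (P := fun z => ¬ g.SameCycle z a → g'.SameCycle x z) fun z => ?_).mp
    (fun _ => .refl _ _) (fun hya => hxa (hxy.trans hya))
  by_cases hza : g.SameCycle z a
  · exact iff_of_true (fun h => absurd (sameCycle_apply_left.mpr hza) h) (fun h => absurd hza h)
  have hz : g z = g' z := by
    rw [mul_apply, swap_apply_of_ne_of_ne (by rintro rfl; exact hza (.refl _ _))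
      (by rintro rfl; exact hza hab.symm)]
  rw [sameCycle_apply_left, hz, sameCycle_apply_right]

theorem sameCycle_mul_swap_iff (hab : g.SameCycle a b) {P : α → Prop}
    (hP : ∀ z, P ((g * swap a b) z) ↔ P z) (ha : ¬ P a) (hb : P b) :
    (g * swap a b).SameCycle x y ↔ g.SameCycle x y ∧ (P x ↔ P y) := by
  refine ⟨fun h => ⟨hab.of_mul_swap h, h.iff_of_forall hP⟩, fun ⟨hxy, hPxy⟩ => ?_⟩
  by_cases hxa : g.SameCycle x a
  · have hPa : ∀ u, (g * swap a b).SameCycle u a → ¬ P u := fun u hu h =>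
      ha ((hu.iff_of_forall hP).mp h)
    have hPb : ∀ u, (g * swap a b).SameCycle u b → P u := fun u hu =>
      (hu.iff_of_forall hP).mpr hb
    rcases hxa.symm.mul_swap_left_or_right (b := b) with hx | hx <;>
      rcases (hxa.symm.trans hxy).mul_swap_left_or_right (b := b) with hy | hy
    · exact hx.trans hy.symm
    · exact absurd (hPxy.mpr (hPb y hy)) (hPa x hx)
    · exact absurd (hPxy.mp (hPb x hx)) (hPa y hy)
    · exact hx.trans hy.symm
  · exact hab.mul_swap_of_not_sameCycle hxa hxy

theorem orbCountOf_mul_swap (hab : g.SameCycle a b) (hsplit : ¬ (g * swap a b).SameCycle a b) :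
    orbCountOf ⇑(g * swap a b) = orbCountOf ⇑g + 1 := by
  classical
  set g' := g * swap a b
  let π : Quot (fun i j => j = g' i) → Quot (fun i j => j = g i) :=
    Quot.lift (Quot.mk _) fun u v huv => quot_mk_eq_iff_sameCycle.mpr
      (hab.of_mul_swap (huv ▸ sameCycle_apply_right.mpr (.refl _ _)))
  have hcycle_a : ∀ u, g.SameCycle u a → ¬ g'.SameCycle u b → g'.SameCycle u a :=
    fun u hu hub => (hu.symm.mul_swap_left_or_right (b := b)).resolve_right hub
  have hbij : Bijective fun q : {q // q ≠ Quot.mk (fun i j => j = g' i) b} => π q := by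
    constructor
    · rintro ⟨⟨u⟩, hu⟩ ⟨⟨v⟩, hv⟩ huv
      simp only [ne_eq, quot_mk_eq_iff_sameCycle] at hu hv
      have huv : g.SameCycle u v := quot_mk_eq_iff_sameCycle.mp huv
      refine Subtype.ext (quot_mk_eq_iff_sameCycle.mpr ?_)
      by_cases hua : g.SameCycle u a
      · exact (hcycle_a u hua hu).trans (hcycle_a v (huv.symm.trans hua) hv).symm
      · exact hab.mul_swap_of_not_sameCycle hua huv
    · rintro ⟨u⟩
      by_cases hua : g.SameCycle u a
      · exact ⟨⟨Quot.mk _ a, fun h => hsplit (quot_mk_eq_iff_sameCycle.mp h)⟩,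
          quot_mk_eq_iff_sameCycle.mpr hua.symm⟩
      · refine ⟨⟨Quot.mk _ u, fun h => hua ?_⟩, rfl⟩
        exact (hab.of_mul_swap (quot_mk_eq_iff_sameCycle.mp h)).trans hab.symm
  rw [orbCountOf, orbCountOf, ← Nat.card_eq_of_bijective _ hbij, ← Finite.card_option,
    Nat.card_congr (optionSubtypeNe _)]

end Equiv.Perm

section Conj
variable {α β : Type*} (E : α ≃ β) {f : α → α} {g : β → β}

theorem reachesBefore_conj (h : Semiconj E f g) {a x b : α} :
    ReachesBefore f a x b ↔ ReachesBefore g (E a) (E x) (E b) := by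
  simp only [ReachesBefore, ← (h.iterate_right _) _, ne_eq, E.apply_eq_iff_eq]

theorem chordsCross_conj (h : Semiconj E f g) {a b c d : α} :
    ChordsCross f a b c d ↔ ChordsCross g (E a) (E b) (E c) (E d) := by
  simp only [ChordsCross, reachesBefore_conj E h]

end Conj

namespace ZMod

variable {p : ℕ} {a b c d x y z : ZMod p}

def fwdDist (a x : ZMod p) : ℕ := (x - a).val

/-- `x` lies on the half-open arc `[a, b)`. -/
def InArc (a b x : ZMod p) : Prop := fwdDist a x < fwdDist a b

theorem fwdDist_eq_zero : fwdDist a x = 0 ↔ x = a := by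
  rw [fwdDist, val_eq_zero, sub_eq_zero]

@[simp]
theorem fwdDist_self (a : ZMod p) : fwdDist a a = 0 := fwdDist_eq_zero.mpr rfl

theorem fwdDist_add_natCast (a : ZMod p) (k : ℕ) : fwdDist a (a + k) = k % p := by
  simp [fwdDist, val_natCast]

theorem fwdDist_add_one_add_one (a x : ZMod p) : fwdDist (a + 1) (x + 1) = fwdDist a x := by
  simp [fwdDist]

variable [NeZero p]

theorem fwdDist_lt (a x : ZMod p) : fwdDist a x < p := val_lt _

theorem fwdDist_injective (a : ZMod p) : Injective (fwdDist a) := fun _ _ h =>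
  sub_left_injective (val_injective p h)

theorem add_fwdDist (a x : ZMod p) : a + fwdDist a x = x := by
  simp [fwdDist]

theorem fwdDist_add_fwdDist (a x y : ZMod p) :
    fwdDist a x + fwdDist x y = fwdDist a y ∨ fwdDist a x + fwdDist x y = fwdDist a y + p := by
  have hsum : fwdDist a y = (fwdDist a x + fwdDist x y) % p := by
    rw [fwdDist, ← sub_add_sub_cancel y x a, add_comm, val_add]; rfl
  have := fwdDist_lt a x
  have := fwdDist_lt x y
  rcases Nat.lt_or_ge (fwdDist a x + fwdDist x y) p with h | h
  · rw [hsum, Nat.mod_eq_of_lt h]; left; rfl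
  · rw [hsum, Nat.mod_eq_sub_mod h, Nat.mod_eq_of_lt (by omega)]; right; omega

theorem one_lt_of_ne (h : x ≠ a) : 1 < p := by
  by_contra! hp
  obtain rfl : p = 1 := le_antisymm hp (Nat.pos_of_ne_zero (NeZero.ne p))
  exact h (Subsingleton.elim _ _)

theorem fwdDist_add_one_left (h : x ≠ a) : fwdDist (a + 1) x + 1 = fwdDist a x := by
  have : Fact (1 < p) := ⟨one_lt_of_ne h⟩
  have h1 : fwdDist a (a + 1) = 1 := by simp [fwdDist, val_one]
  have := fwdDist_add_fwdDist a (a + 1) x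
  have := fwdDist_lt (a + 1) x
  have := fwdDist_eq_zero.not.mpr h
  omega

theorem reachesBefore_add_one_iff : ReachesBefore (· + 1) a x b ↔ InArc a b x := by
  simp only [ReachesBefore, add_right_iterate, nsmul_one, InArc]
  constructor
  · rintro ⟨m, rfl, hm⟩
    have hb : m < fwdDist a b := by
      by_contra! hle
      exact hm _ hle (add_fwdDist a b)
    have := Nat.mod_le m p
    rw [fwdDist_add_natCast]
    omega
  · intro h
    refine ⟨fwdDist a x, add_fwdDist a x, fun k hk hkb => ?_⟩
    have := fwdDist_lt a x
    rw [← hkb, fwdDist_add_natCast, Nat.mod_eq_of_lt (by omega)] at h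
    omega

theorem chordsCross_add_one_iff :
    ChordsCross (· + 1) a b c d ↔ ¬ (InArc a b c ↔ InArc a b d) := by
  simp only [ChordsCross, reachesBefore_add_one_iff]

theorem fwdDist_add_fwdDist_comm (h : a ≠ b) : fwdDist a b + fwdDist b a = p := by
  have := fwdDist_add_fwdDist a b a
  have := fwdDist_eq_zero.not.mpr h
  have := fwdDist_eq_zero.not.mpr h.symm
  simp only [fwdDist_self] at *
  omega

theorem inArc_swap (hab : a ≠ b) (hxa : x ≠ a) : InArc b a x ↔ ¬ InArc a b x := by
  have := fwdDist_add_fwdDist a b x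
  have := fwdDist_add_fwdDist_comm hab
  have := fwdDist_eq_zero.not.mpr hxa
  have := fwdDist_lt a x
  have := fwdDist_lt b x
  simp only [InArc]
  omega

theorem chordsCross_add_one_swap (hab : a ≠ b) (hca : c ≠ a) (hda : d ≠ a) :
    ChordsCross (· + 1) b a c d ↔ ChordsCross (· + 1) a b c d := by
  simp only [chordsCross_add_one_iff, inArc_swap hab hca, inArc_swap hab hda,
    not_iff_not]

theorem chordsCross_add_one_comm (hab : a ≠ b) (hcd : c ≠ d) (hac : a ≠ c) (had : a ≠ d)
    (hbc : b ≠ c) (hbd : b ≠ d) :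
    ChordsCross (· + 1) a b c d ↔ ChordsCross (· + 1) c d a b := by
  have := fwdDist_add_fwdDist a c d
  have := fwdDist_add_fwdDist a c b
  have := fwdDist_add_fwdDist_comm hac
  have := fwdDist_eq_zero.not.mpr hab.symm
  have := fwdDist_eq_zero.not.mpr hac.symm
  have := fwdDist_eq_zero.not.mpr had.symm
  have := fwdDist_eq_zero.not.mpr hcd.symm
  have := fwdDist_eq_zero.not.mpr hbc
  have := (fwdDist_injective a).ne hcd
  have := (fwdDist_injective a).ne hbc.symm
  have := (fwdDist_injective a).ne hbd.symm
  have := fwdDist_lt a b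
  have := fwdDist_lt a c
  have := fwdDist_lt a d
  have := fwdDist_lt c d
  have := fwdDist_lt c b
  simp only [chordsCross_add_one_iff, InArc]
  omega

theorem inArc_add_one_add_one (hza : z ≠ a) (hzb : z ≠ b) :
    InArc (a + 1) (b + 1) z ↔ InArc a b z := by
  have := fwdDist_add_one_left hza
  have := (fwdDist_injective a).ne hzb
  simp only [InArc, fwdDist_add_one_add_one]
  omega

theorem not_inArc_add_one_add_one_left : ¬ InArc (a + 1) (b + 1) a := by
  rcases eq_or_ne b a with rfl | hba
  · simp [InArc]
  have : Fact (1 < p) := ⟨one_lt_of_ne hba⟩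
  have h1 : fwdDist a (a + 1) = 1 := by simp [fwdDist, val_one]
  have := fwdDist_add_fwdDist_comm (a := a) (b := a + 1) (by rintro h; simp [← h] at h1)
  have := fwdDist_lt a b
  simp only [InArc, fwdDist_add_one_add_one]
  omega

theorem inArc_add_one_add_one_right (hab : a ≠ b) : InArc (a + 1) (b + 1) b := by
  have := fwdDist_add_one_left hab.symm
  simp only [InArc, fwdDist_add_one_add_one]
  omega

/-- `InArc (a + 1) (b + 1)` is the arc `(a, b]`; unlike `[a, b)`, it is also preserved at the
ends of the chord `{a, b}`. -/
theorem inArc_add_one_apply_add_one {τ : ZMod p → ZMod p} (hab : a ≠ b) (hτa : τ a = b)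
    (hτb : τ b = a) (hτ : ∀ z, z ≠ a → z ≠ b → (InArc a b (τ z) ↔ InArc a b z))
    (z : ZMod p) :
    InArc (a + 1) (b + 1) (τ z + 1) ↔ InArc (a + 1) (b + 1) z := by
  have hshift : InArc (a + 1) (b + 1) (τ z + 1) ↔ InArc a b (τ z) := by
    simp only [InArc, fwdDist_add_one_add_one]
  rw [hshift]
  rcases eq_or_ne z a with rfl | hza
  · rw [hτa]
    exact iff_of_false (lt_irrefl _) not_inArc_add_one_add_one_left
  rcases eq_or_ne z b with rfl | hzb
  · rw [hτb]
    refine iff_of_true ?_ (inArc_add_one_add_one_right hab)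
    simpa [InArc] using Nat.pos_of_ne_zero (fwdDist_eq_zero.not.mpr hab.symm)
  · rw [hτ z hza hzb, inArc_add_one_add_one hza hzb]

end ZMod

section Chords

variable {α : Type*}

def NoncrossingChords (c ι : α → α) (T : Finset α) : Prop :=
  ∀ x ∈ T, ∀ y ∈ T, y ≠ x → y ≠ ι x → ¬ ChordsCross c x (ι x) y (ι y)

theorem NoncrossingChords.mono {c ι : α → α} {S T : Finset α} (h : NoncrossingChords c ι T)
    (hST : S ⊆ T) : NoncrossingChords c ι S :=
  fun x hx y hy => h x (hST hx) y (hST hy)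

variable [DecidableEq α] {ι : α → α} {T : Finset α} {a : α}

@[elab_as_elim]
theorem Finset.induction_on_pairs (hι : Involutive ι) {P : Finset α → Prop} (empty : P ∅)
    (insert_pair : ∀ T a, (∀ z ∈ T, ι z ∈ T) → a ∉ T → ι a ∉ T → P T →
      P (insert a (insert (ι a) T)))
    (T : Finset α) (hT : ∀ z ∈ T, ι z ∈ T) : P T := by
  induction T using Finset.strongInduction with
  | H T ih =>
    rcases T.eq_empty_or_nonempty with rfl | ⟨a, ha⟩
    · exact empty
    set T' := (T.erase a).erase (ι a)
    have hT' : ∀ z ∈ T', ι z ∈ T' := fun z hz => by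
      simp only [T', Finset.mem_erase] at hz ⊢
      exact ⟨hι.injective.ne hz.2.1, fun h => hz.1 (by rw [← h, hι z]), hT z hz.2.2⟩
    have hTeq : insert a (insert (ι a) T') = T := by
      ext z
      by_cases hza : z = a
      · simp [hza, ha]
      by_cases hzι : z = ι a
      · simp [hzι, hT a ha]
      · simp [T', hza, hzι]
    rw [← hTeq]
    refine insert_pair T' a hT' (by simp [T']) (by simp [T']) (ih T' ?_ hT')
    exact (Finset.ssubset_iff_of_subset (((T.erase a).erase_subset _).trans (T.erase_subset a))).mpr
      ⟨a, ha, by simp⟩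

theorem Finset.card_insert_pair (hfix : ∀ x, ι x ≠ x) (ha : a ∉ T)
    (hιa : ι a ∉ T) : (insert a (insert (ι a) T)).card = T.card + 2 := by
  rw [Finset.card_insert_of_notMem (by simp [ha, (hfix a).symm]),
    Finset.card_insert_of_notMem hιa]

theorem Finset.even_card_of_involutive (hι : Involutive ι) (hfix : ∀ x, ι x ≠ x)
    (T : Finset α) (hT : ∀ z ∈ T, ι z ∈ T) : Even T.card := by
  refine Finset.induction_on_pairs hι (by simp) (fun T a _ ha hιa ih => ?_) T hT
  rw [Finset.card_insert_pair hfix ha hιa]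
  exact ih.add even_two

theorem Finset.piecewise_insert_pair_swap (hι : Involutive ι) (ha : a ∉ T) (hιa : ι a ∉ T)
    (z : α) :
    (insert a (insert (ι a) T)).piecewise ι id (swap a (ι a) z) = T.piecewise ι id z := by
  rcases eq_or_ne z a with rfl | hza
  · simp [ha, hι z]
  rcases eq_or_ne z (ι a) with rfl | hzι
  · simp [hιa]
  rw [swap_apply_of_ne_of_ne hza hzι]
  by_cases hz : z ∈ T <;> simp [hz, hza, hzι]

end Chords

namespace ZMod

variable {p : ℕ} [NeZero p] {ι : ZMod p → ZMod p} {T : Finset (ZMod p)} {a : ZMod p}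

theorem sameCycle_of_forall_eq_add_one {g : Perm (ZMod p)} (hg : ∀ z, g z = z + 1)
    (x y : ZMod p) : g.SameCycle x y := by
  have hpow : ∀ k : ℕ, (g ^ k) x = x + k := fun k => by
    induction k with
    | zero => simp
    | succ k ih => rw [pow_succ', Perm.mul_apply, ih, hg]; push_cast; ring
  exact ⟨fwdDist x y, by rw [zpow_natCast, hpow, add_fwdDist]⟩

theorem inArc_invariant_of_noncrossing (hι : Involutive ι) (hfix : ∀ x, ι x ≠ x)
    (hnc : NoncrossingChords (· + 1) ι T) (ha : a ∈ T) (hιa : ι a ∈ T) (z : ZMod p) :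
    InArc (a + 1) (ι a + 1) (T.piecewise ι id z + 1) ↔ InArc (a + 1) (ι a + 1) z := by
  refine inArc_add_one_apply_add_one (τ := T.piecewise ι id) (hfix a).symm
    (Finset.piecewise_eq_of_mem _ _ _ ha)
    (by rw [Finset.piecewise_eq_of_mem _ _ _ hιa, hι a]) (fun w hwa hwι => ?_) z
  by_cases hw : w ∈ T
  · rw [Finset.piecewise_eq_of_mem _ _ _ hw]
    have := hnc a ha w hw hwa hwι
    rwa [chordsCross_add_one_iff, not_not, Iff.comm] at this
  · rw [Finset.piecewise_eq_of_notMem _ _ _ hw, id]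

theorem sameCycle_iff_of_insert_pair (hι : Involutive ι) (hfix : ∀ x, ι x ≠ x)
    (hnc : NoncrossingChords (· + 1) ι (insert a (insert (ι a) T))) {g : Perm (ZMod p)}
    (hg : ∀ z, g z = (insert a (insert (ι a) T)).piecewise ι id z + 1)
    (hsame : (g * swap a (ι a)).SameCycle a (ι a)) (x y : ZMod p) :
    g.SameCycle x y ↔ (g * swap a (ι a)).SameCycle x y ∧
      (InArc (a + 1) (ι a + 1) x ↔ InArc (a + 1) (ι a + 1) y) := by
  have hP : ∀ z, InArc (a + 1) (ι a + 1) ((g * swap a (ι a) * swap a (ι a)) z) ↔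
      InArc (a + 1) (ι a + 1) z := fun z => by
    rw [mul_swap_mul_self, hg]
    exact inArc_invariant_of_noncrossing hι hfix hnc (Finset.mem_insert_self _ _)
      (Finset.mem_insert_of_mem (Finset.mem_insert_self _ _)) z
  have := Perm.sameCycle_mul_swap_iff (x := x) (y := y) hsame hP not_inArc_add_one_add_one_left
    (inArc_add_one_add_one_right (hfix a).symm)
  rwa [mul_swap_mul_self] at this

theorem orbits_of_noncrossing (hι : Involutive ι) (hfix : ∀ x, ι x ≠ x) (T : Finset (ZMod p))
    (hT : ∀ z ∈ T, ι z ∈ T) (hnc : NoncrossingChords (· + 1) ι T) (g : Perm (ZMod p))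
    (hg : ∀ z, g z = T.piecewise ι id z + 1) :
    orbCountOf g = 1 + T.card / 2 ∧ ∀ x ∉ T, ∀ y ∉ T,
      (g.SameCycle x y ↔ ∀ z ∈ T, ¬ ChordsCross (· + 1) z (ι z) x y) := by
  revert hnc g
  refine Finset.induction_on_pairs hι ?_ (fun T a hT ha hιa ih => ?_) T hT
  · intro _ g hg
    simp only [Finset.piecewise_empty, id] at hg
    simp [Perm.orbCountOf_eq_one_iff, sameCycle_of_forall_eq_add_one hg]
  intro hnc g hg
  have haS : a ∈ insert a (insert (ι a) T) := Finset.mem_insert_self _ _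
  have hTS : T ⊆ insert a (insert (ι a) T) :=
    (T.subset_insert _).trans (Finset.subset_insert _ _)
  obtain ⟨hcount, hchar⟩ := ih (hnc.mono hTS) (g * swap a (ι a)) fun z => by
    rw [Perm.mul_apply, hg, Finset.piecewise_insert_pair_swap hι ha hιa]
  have hsame : (g * swap a (ι a)).SameCycle a (ι a) := by
    refine (hchar a ha (ι a) hιa).mpr fun z hz => hnc z (hTS hz) a haS ?_ ?_
    · rintro rfl; exact ha hz
    · rintro rfl; exact hιa (by rwa [hι z])
  have key := sameCycle_iff_of_insert_pair hι hfix hnc hg hsame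
  constructor
  · have hsplit : ¬ g.SameCycle a (ι a) := fun h =>
      not_inArc_add_one_add_one_left <|
        ((key a (ι a)).mp h).2.mpr (inArc_add_one_add_one_right (hfix a).symm)
    have := Perm.orbCountOf_mul_swap hsame (by rwa [mul_swap_mul_self])
    rw [mul_swap_mul_self] at this
    rw [this, hcount, Finset.card_insert_pair hfix ha hιa]
    omega
  · intro x hx y hy
    simp only [Finset.mem_insert, not_or] at hx hy
    rw [key, hchar x hx.2.2 y hy.2.2, inArc_add_one_add_one hx.1 hx.2.1,
      inArc_add_one_add_one hy.1 hy.2.1]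
    simp only [Finset.forall_mem_insert, hι a, chordsCross_add_one_iff (a := a), not_not,
      chordsCross_add_one_swap (hfix a).symm hx.1 hy.1]
    tauto

end ZMod

section CyclicChords

variable {α : Type*} [Finite α] {c : Perm α} {a b x y : α}

theorem chordsCross_swap (hc : orbCountOf c = 1) (hab : a ≠ b) (hxa : x ≠ a) (hya : y ≠ a) :
    ChordsCross c b a x y ↔ ChordsCross c a b x y := by
  obtain ⟨p, _, E, hE⟩ := c.exists_equiv_zmod hc
  simp only [chordsCross_conj E hE]
  exact ZMod.chordsCross_add_one_swap (E.injective.ne hab) (E.injective.ne hxa)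
    (E.injective.ne hya)

theorem chordsCross_comm (hc : orbCountOf c = 1) (hab : a ≠ b) (hxy : x ≠ y) (hax : a ≠ x)
    (hay : a ≠ y) (hbx : b ≠ x) (hby : b ≠ y) :
    ChordsCross c a b x y ↔ ChordsCross c x y a b := by
  obtain ⟨p, _, E, hE⟩ := c.exists_equiv_zmod hc
  simp only [chordsCross_conj E hE]
  exact ZMod.chordsCross_add_one_comm (E.injective.ne hab) (E.injective.ne hxy)
    (E.injective.ne hax) (E.injective.ne hay) (E.injective.ne hbx) (E.injective.ne hby)

theorem orbCountOf_comp_piecewise [DecidableEq α] (hc : orbCountOf c = 1) {ι : α → α}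
    (hι : Involutive ι) (hfix : ∀ x, ι x ≠ x) {T : Finset α} (hT : ∀ z ∈ T, ι z ∈ T)
    (hnc : NoncrossingChords c ι T) : orbCountOf (c ∘ T.piecewise ι id) = 1 + T.card / 2 := by
  obtain ⟨p, _, E, hE⟩ := c.exists_equiv_zmod hc
  set ι' := E ∘ ι ∘ E.symm
  set T' := T.map E.toEmbedding
  have hmem : ∀ z, z ∈ T' ↔ E.symm z ∈ T := fun z => Finset.mem_map_equiv
  have hι' : Involutive ι' := fun z => by simp [ι', hι _]
  have hfix' : ∀ z, ι' z ≠ z := fun z h => hfix (E.symm z) (E.eq_symm_apply.mpr h)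
  have hT' : ∀ z ∈ T', ι' z ∈ T' := fun z hz => by
    simpa [hmem, ι'] using hT _ ((hmem z).mp hz)
  have hnc' : NoncrossingChords (· + 1) ι' T' := fun x hx y hy hyx hyι => by
    have := hnc _ ((hmem x).mp hx) _ ((hmem y).mp hy) (E.symm.injective.ne hyx)
      (fun h => hyι (by simp [ι', ← h]))
    simpa [chordsCross_conj E hE, ι'] using this
  have hpw : ∀ x, E (T.piecewise ι id x) = T'.piecewise ι' id (E x) := fun x => by
    by_cases hx : x ∈ T <;> simp [Finset.piecewise, hx, hmem, ι']
  let g : Perm (ZMod p) := Equiv.addRight 1 * (hι'.piecewise hT').toPerm _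
  have := (ZMod.orbits_of_noncrossing hι' hfix' T' hT' hnc' g fun z => rfl).1
  rw [Finset.card_map] at this
  rw [← this]
  exact orbCountOf_conj E fun x => by
    rw [comp_apply, hE (T.piecewise ι id x), hpw]
    rfl

end CyclicChords

namespace RibbonGraph

variable {n : ℕ} (Γ : RibbonGraph n) {A T : Finset (Fin (2 * n))} {i j : Fin (2 * n)}

theorem σ1_involutive : Involutive Γ.σ1 := fun i => by
  simpa using congrArg (· i) Γ.invol

theorem edgeOrd_σ1 (i : Fin (2 * n)) : Γ.edgeOrd (Γ.σ1 i) = Γ.edgeOrd i := by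
  simp [edgeOrd, Γ.σ1_involutive i, min_comm]

theorem edgeOrd_ne (hji : j ≠ i) (hjι : j ≠ Γ.σ1 i) : Γ.edgeOrd j ≠ Γ.edgeOrd i := by
  have h3 : Γ.σ1 j ≠ i := fun h => hjι (by rw [← h, Γ.σ1_involutive])
  have h4 : Γ.σ1 j ≠ Γ.σ1 i := Γ.σ1.injective.ne hji
  simp only [edgeOrd, ne_eq, Fin.ext_iff] at *
  omega

theorem bdryMap_sdiff (hA : Γ.Closed A) (hTA : T ⊆ A) :
    Γ.bdryMap (A \ T) = Γ.bdryMap A ∘ T.piecewise Γ.σ1 id := funext fun i => by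
  by_cases hiT : i ∈ T
  · simp [bdryMap, hiT, hA i (hTA hiT), Γ.σ1_involutive i]
  · simp [bdryMap, hiT]

def bdryPerm (hA : Γ.Closed A) : Perm (Fin (2 * n)) :=
  Γ.σ0 * (Γ.σ1_involutive.piecewise hA).toPerm _

theorem coe_bdryPerm (hA : Γ.Closed A) : ⇑(Γ.bdryPerm hA) = Γ.bdryMap A := funext fun i => by
  by_cases hi : i ∈ A <;> simp [bdryPerm, bdryMap, hi]

theorem eCount_union (hdisj : Disjoint A T) (hT : Γ.Closed T) :
    Γ.eCount (A ∪ T) = Γ.eCount A + Γ.eCount T := by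
  obtain ⟨k, hk⟩ := Finset.even_card_of_involutive Γ.σ1_involutive Γ.fixfree T hT
  simp only [eCount, Finset.card_union_of_disjoint hdisj, hk]
  omega

theorem eCount_sdiff_add (hTA : T ⊆ A) (hT : Γ.Closed T) :
    Γ.eCount (A \ T) + Γ.eCount T = Γ.eCount A := by
  rw [← Γ.eCount_union Finset.sdiff_disjoint hT, Finset.sdiff_union_of_subset hTA]

open scoped Classical in
noncomputable def liveIn (A : Finset (Fin (2 * n))) : Finset (Fin (2 * n)) := A.filter (Γ.Live A)

theorem mem_liveIn : i ∈ Γ.liveIn A ↔ i ∈ A ∧ Γ.Live A i := by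
  simp [liveIn]

theorem deadIn_eq_sdiff_liveIn : Γ.deadIn A = A \ Γ.liveIn A := by
  ext i
  simp only [deadIn, liveIn, Finset.mem_filter, Finset.mem_sdiff]
  tauto

variable {Γ}

theorem Closed.sdiff (hA : Γ.Closed A) (hT : Γ.Closed T) : Γ.Closed (A \ T) := fun i hi => by
  rw [Finset.mem_sdiff] at hi ⊢
  exact ⟨hA i hi.1, fun h => hi.2 (by simpa [Γ.σ1_involutive i] using hT _ h)⟩

theorem IsQuasiTree.orbCountOf_bdryPerm (hA : Γ.IsQuasiTree A) :
    orbCountOf (Γ.bdryPerm hA.1) = 1 := by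
  rw [coe_bdryPerm]
  exact hA.2.2

theorem σ1_ne_of_ne_σ1 (h : j ≠ Γ.σ1 i) : Γ.σ1 j ≠ i := fun h' =>
  h (by rw [← h', Γ.σ1_involutive])

theorem IsQuasiTree.live_σ1 (hA : Γ.IsQuasiTree A) (hi : Γ.Live A i) : Γ.Live A (Γ.σ1 i) := by
  intro j hj hcross
  rw [edgeOrd_σ1] at hj
  have hji : j ≠ i := by rintro rfl; exact lt_irrefl _ hj
  have hjι : j ≠ Γ.σ1 i := by rintro rfl; rw [edgeOrd_σ1] at hj; exact lt_irrefl _ hj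
  refine hi j hj ?_
  rw [Crosses, Γ.σ1_involutive, ← Γ.coe_bdryPerm hA.1] at hcross
  rw [Crosses, ← Γ.coe_bdryPerm hA.1]
  exact (chordsCross_swap hA.orbCountOf_bdryPerm (Γ.fixfree i).symm hji
    (σ1_ne_of_ne_σ1 hjι)).mp hcross

theorem IsQuasiTree.noncrossingChords (hA : Γ.IsQuasiTree A) (hT : ∀ i ∈ T, Γ.Live A i) :
    NoncrossingChords (Γ.bdryMap A) Γ.σ1 T := by
  intro i hi j hj hji hjι
  rcases lt_or_gt_of_ne (Γ.edgeOrd_ne hji hjι) with h | h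
  · exact hT i hi j h
  · intro hcross
    refine hT j hj i h ?_
    rw [← Γ.coe_bdryPerm hA.1] at hcross
    rw [Crosses, ← Γ.coe_bdryPerm hA.1]
    exact (chordsCross_comm hA.orbCountOf_bdryPerm (Γ.fixfree j).symm (Γ.fixfree i).symm hji
      hjι (σ1_ne_of_ne_σ1 hjι) (Γ.σ1.injective.ne hji)).mpr hcross

theorem IsQuasiTree.faces_sdiff (hA : Γ.IsQuasiTree A) (hTA : T ⊆ A) (hT : Γ.Closed T)
    (hlive : ∀ i ∈ T, Γ.Live A i) : Γ.faces (A \ T) = 1 + Γ.eCount T := by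
  have hnc := hA.noncrossingChords hlive
  rw [← Γ.coe_bdryPerm hA.1] at hnc
  rw [faces, Γ.bdryMap_sdiff hA.1 hTA, ← Γ.coe_bdryPerm hA.1]
  exact orbCountOf_comp_piecewise hA.orbCountOf_bdryPerm Γ.σ1_involutive Γ.fixfree hT hnc

theorem IsQuasiTree.closed_liveIn (hA : Γ.IsQuasiTree A) : Γ.Closed (Γ.liveIn A) :=
  fun i hi => by
  rw [mem_liveIn] at hi ⊢
  exact ⟨hA.1 i hi.1, hA.live_σ1 hi.2⟩

end RibbonGraph

theorem stmt10_general {n : ℕ} (Γ : RibbonGraph n)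
    (A : Finset (Fin (2 * n))) (hA : Γ.IsQuasiTree A)
    (S1 : Finset (Fin (2 * n)))
    (hS1 : ∀ i ∈ S1, i ∈ A ∧ Γ.Live A i) (hS1c : Γ.Closed S1)
    (nW : ℤ)
    (hnW : nW = (Γ.kComp (Γ.deadIn A ∪ S1) : ℤ) + (Γ.eCount S1 : ℤ) - (Γ.kComp (Γ.deadIn A) : ℤ)) :
    Γ.nullity (Γ.deadIn A ∪ S1) = Γ.nullity (Γ.deadIn A) + nW ∧
    Γ.twoGenus (Γ.deadIn A ∪ S1) = Γ.twoGenus (Γ.deadIn A) + 2 * nW := by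
  have hS1L : S1 ⊆ Γ.liveIn A := fun i hi => Γ.mem_liveIn.mpr (hS1 i hi)
  have hlive : ∀ i ∈ Γ.liveIn A, Γ.Live A i := fun i hi => (Γ.mem_liveIn.mp hi).2
  have hL : Γ.liveIn A ⊆ A := fun i hi => (Γ.mem_liveIn.mp hi).1
  have hDS : Γ.deadIn A ∪ S1 = A \ (Γ.liveIn A \ S1) := by
    rw [Γ.deadIn_eq_sdiff_liveIn, sdiff_sdiff_eq_sdiff_sup (hS1L.trans hL)]
    rfl
  have hf : Γ.faces (Γ.deadIn A) = Γ.faces (Γ.deadIn A ∪ S1) + Γ.eCount S1 := by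
    rw [hDS, Γ.deadIn_eq_sdiff_liveIn, hA.faces_sdiff hL hA.closed_liveIn hlive,
      hA.faces_sdiff (Finset.sdiff_subset.trans hL) (hA.closed_liveIn.sdiff hS1c)
        (fun i hi => hlive i (Finset.sdiff_subset hi)),
      ← Γ.eCount_sdiff_add hS1L hS1c]
    ring
  have he : Γ.eCount (Γ.deadIn A ∪ S1) = Γ.eCount (Γ.deadIn A) + Γ.eCount S1 := by
    refine Γ.eCount_union (Finset.disjoint_left.mpr fun i hi hiS => ?_) hS1c
    rw [Γ.deadIn_eq_sdiff_liveIn] at hi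
    exact (Finset.mem_sdiff.mp hi).2 (hS1L hiS)
  simp only [RibbonGraph.nullity, RibbonGraph.twoGenus]
  rw [he, hf, hnW]
  push_cast
  constructor <;> ring

/-- For a quasi-tree `A` with internally dead subgraph `D = deadIn A`
and a set `S1` of internally live edges, let `W` be the corresponding spanning
subgraph of `G_A`, so that its nullity is `n(W) = k(D ∪ S1) + e(S1) - k(D)`.
Then `n(D ∪ S1) = n(D) + n(W)` and `g(D ∪ S1) = g(D) + n(W)`. -/
theorem stmt10 {n : ℕ} (Γ : RibbonGraph n) (hΓ : Γ.Connected)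
    (A : Finset (Fin (2 * n))) (hA : Γ.IsQuasiTree A)
    (S1 : Finset (Fin (2 * n)))
    (hS1 : ∀ i ∈ S1, i ∈ A ∧ Γ.Live A i) (hS1c : Γ.Closed S1)
    (nW : ℤ)
    (hnW : nW = (Γ.kComp (Γ.deadIn A ∪ S1) : ℤ) + (Γ.eCount S1 : ℤ) - (Γ.kComp (Γ.deadIn A) : ℤ)) :
    Γ.nullity (Γ.deadIn A ∪ S1) = Γ.nullity (Γ.deadIn A) + nW ∧
    Γ.twoGenus (Γ.deadIn A ∪ S1) = Γ.twoGenus (Γ.deadIn A) + 2 * nW :=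
  stmt10_general Γ A hA S1 hS1 hS1c nW hnW
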